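/- The Shahshahani divergence of the effective replicator field of a finite game equals (1/2)-times the multilinear extension of the harmonicity function: div X̃(x) = (1/2) ∑_{α ∈ A} x_α F(α), where F(α) = ∑_{i ∈ N} ∑_{β_i ∈ A_i} (u_i(β_i; α_{-i}) − u_i(α_i; α_{-i})) and x_α = ∏_i x_{i,α_i}. -/

import Mathlib

/-!
The divergence splits into one block per player. In the block of player `i`, the payoffs
`ṽ_{i,l}` do not depend on `i`'s own coordinates, so along the coordinate line
`x̃ + t e_{i,k}` the component `X̃_{i,k}` is the quadratic `(x̃_{i,k} + t)(ṽ_{i,k} − V − t ṽ_{i,k})`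
with `V = ∑_l x̃_{i,l} ṽ_{i,l}`, while `√det g̃_i = ((x_{i,0} − t)(x̃_{i,k} + t) c)^{-1/2}`
with `c = ∏_{l ≠ k} x̃_{i,l}` has logarithmic derivative `1/(2 x_{i,0}) − 1/(2 x̃_{i,k})`.
Summing over `k` and using `x_{i,0} = 1 − ∑_l x̃_{i,l}`, the block equals
`(∑_k ṽ_{i,k} − |A_i| V) / 2 = (∑_β u_i(β; x_{-i}) − |A_i| u_i(x)) / 2`.

On the other side, splitting `α = (α_i, α_{-i})` and summing out `α_i` (the weights `x_{i,α_i}`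
sum to `1`) gives `∑_α x_α u_i(β; α_{-i}) = u_i(β; x_{-i})`, so `∑_α x_α F(α)` is the sum over `i`
of the same quantities `∑_β u_i(β; x_{-i}) − |A_i| u_i(x)`.
-/

open Finset

noncomputable section

/-- Full coordinates on the simplex from effective (corner-of-cube) coordinates:
`x_{i,0} = 1 − ∑_k x̃_{i,k}` and `x_{i,k.succ} = x̃_{i,k}`. -/
def fullCoord {ι : Type*} [Fintype ι] (m : ι → ℕ)
    (y : ∀ i, Fin (m i) → ℝ) : ∀ i, Fin (m i + 1) → ℝ :=
  fun i => Fin.cons (1 - ∑ k, y i k) (y i)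

/-- The multilinear mixed extension of player `i`'s payoff function. -/
def mixedPayoff {ι : Type*} [Fintype ι] [DecidableEq ι] (m : ι → ℕ)
    (u : ι → (∀ j, Fin (m j + 1)) → ℝ) (i : ι) (x : ∀ j, Fin (m j + 1) → ℝ) : ℝ :=
  ∑ α : ∀ j, Fin (m j + 1), u i α * ∏ j, x j (α j)

/-- The mixed payoff `u_i(a ; x_{-i})`. -/
def unilateralPayoff {ι : Type*} [Fintype ι] [DecidableEq ι] (m : ι → ℕ)
    (u : ι → (∀ j, Fin (m j + 1)) → ℝ) (i : ι) (a : Fin (m i + 1))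
    (x : ∀ j, Fin (m j + 1) → ℝ) : ℝ :=
  mixedPayoff m u i (Function.update x i (fun b => if b = a then 1 else 0))

/-- The effective payoff field `ṽ_{i,k}(x̃) = u_i(k;x_{-i}) − u_i(0_i;x_{-i})`. -/
def effField {ι : Type*} [Fintype ι] [DecidableEq ι] (m : ι → ℕ)
    (u : ι → (∀ j, Fin (m j + 1)) → ℝ) (i : ι) (k : Fin (m i))
    (y : ∀ j, Fin (m j) → ℝ) : ℝ :=
  unilateralPayoff m u i k.succ (fullCoord m y) -
    unilateralPayoff m u i 0 (fullCoord m y)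

/-- The effective replicator field
`X̃_{i,k}(x̃) = x̃_{i,k} (ṽ_{i,k}(x̃) − ∑_l x̃_{i,l} ṽ_{i,l}(x̃))`. -/
def effReplicator {ι : Type*} [Fintype ι] [DecidableEq ι] (m : ι → ℕ)
    (u : ι → (∀ j, Fin (m j + 1)) → ℝ) (i : ι) (k : Fin (m i))
    (y : ∀ j, Fin (m j) → ℝ) : ℝ :=
  y i k * (effField m u i k y - ∑ l, y i l * effField m u i l y)

/-- `√(det g̃_i)`, the square root of the determinant of the effective Shahshahani
metric of player `i`: `det g̃_i = 1 / (x_{i,0} ∏_k x̃_{i,k})`. -/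
def sqrtDet {ι : Type*} [Fintype ι] (m : ι → ℕ) (i : ι)
    (y : ∀ j, Fin (m j) → ℝ) : ℝ :=
  Real.sqrt (1 / ((1 - ∑ k, y i k) * ∏ k, y i k))

/-- The coordinate direction `(i, k)` in the effective strategy space. -/
def coordDir {ι : Type*} [Fintype ι] [DecidableEq ι] (m : ι → ℕ) (i : ι)
    (k : Fin (m i)) : ∀ j, Fin (m j) → ℝ :=
  Function.update (0 : ∀ j, Fin (m j) → ℝ) i (Pi.single k 1)

/-- The Shahshahani (Riemannian) divergence of the effective replicator field:
`div X̃ = ∑_i (det g̃_i)^{-1/2} ∑_k ∂_{x̃_{i,k}} ((det g̃_i)^{1/2} X̃_{i,k})`. -/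
def shahDiv {ι : Type*} [Fintype ι] [DecidableEq ι] (m : ι → ℕ)
    (u : ι → (∀ j, Fin (m j + 1)) → ℝ) (y : ∀ j, Fin (m j) → ℝ) : ℝ :=
  ∑ i, (sqrtDet m i y)⁻¹ *
    ∑ k, fderiv ℝ (fun z => sqrtDet m i z * effReplicator m u i k z) y (coordDir m i k)

theorem sum_mul_prod_eq_sum_mul_sum_piSplitAt {ι R : Type*} [Fintype ι] [DecidableEq ι]
    [CommSemiring R] {β : ι → Type*} [∀ j, Fintype (β j)] (x : ∀ j, β j → R)
    (w : (∀ j, β j) → R) (i : ι) :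
    ∑ α, w α * ∏ j, x j (α j)
      = ∑ a, x i a * ∑ γ : ∀ j : {j // j ≠ i}, β j,
          w ((Equiv.piSplitAt i β).symm (a, γ)) * ∏ j, x j.1 (γ j) := by
  rw [← (Equiv.piSplitAt i β).symm.sum_comp, Fintype.sum_prod_type]
  refine sum_congr rfl fun a _ => ?_
  rw [mul_sum]
  refine sum_congr rfl fun γ _ => ?_
  rw [Fintype.prod_eq_mul_prod_subtype_ne _ i, mul_left_comm]
  congr 2
  · simp
  · exact prod_congr rfl fun j _ => by simp [j.2]

theorem Function.update_piSplitAt_symm {ι : Type*} [DecidableEq ι] {β : ι → Type*} (i : ι)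
    (a b : β i) (γ : ∀ j : {j // j ≠ i}, β j) :
    Function.update ((Equiv.piSplitAt i β).symm (a, γ)) i b
      = (Equiv.piSplitAt i β).symm (b, γ) := by
  funext j
  rcases eq_or_ne j i with rfl | h
  · simp
  · simp [h]

theorem HasDerivAt.sqrt_inv {w : ℝ → ℝ} {w' t : ℝ} (hw : HasDerivAt w w' t) (ht : 0 < w t) :
    HasDerivAt (fun s => √(w s)⁻¹) (√(w t)⁻¹ * (-w' / (2 * w t))) t := by
  simp only [Real.sqrt_inv]
  have hsqrt : 0 < √(w t) := Real.sqrt_pos.mpr ht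
  refine ((hw.sqrt ht.ne').inv hsqrt.ne').congr_deriv ?_
  field_simp
  rw [Real.sq_sqrt ht.le]

theorem sum_replicator_divergence_eq {n : ℕ} (y v : Fin n → ℝ) (hy : ∑ l, y l ≠ 1) :
    ∑ k, ((v k - ∑ l, y l * v l) * (1 / 2 + y k / (2 * (1 - ∑ l, y l))) - y k * v k)
      = (∑ k, v k - (n + 1) * ∑ l, y l * v l) / 2 := by
  have hx₀ : 1 - ∑ l, y l ≠ 0 := sub_ne_zero.mpr hy.symm
  simp only [mul_add, sub_mul, sum_sub_distrib, sum_add_distrib, ← sum_mul, ← mul_sum,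
    mul_div_assoc', ← sum_div, sum_const, card_univ, Fintype.card_fin, nsmul_eq_mul,
    mul_comm (v _) (y _)]
  field_simp
  ring

theorem Fin.sum_sub_zero_sub_mul_sum_eq {n : ℕ} (U x : Fin (n + 1) → ℝ) (hx : ∑ a, x a = 1) :
    ∑ k : Fin n, (U k.succ - U 0) - (n + 1) * ∑ k : Fin n, x k.succ * (U k.succ - U 0)
      = ∑ a, U a - (n + 1) * ∑ a, x a * U a := by
  simp only [Fin.sum_univ_succ] at hx ⊢
  simp only [sum_sub_distrib, mul_sub, ← sum_mul, sum_const, nsmul_eq_mul]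
  linear_combination (n + 1 : ℝ) * U 0 * hx

section Simplex

variable {ι : Type*} [Fintype ι] (m : ι → ℕ)

theorem fullCoord_sum (y : ∀ i, Fin (m i) → ℝ) (i : ι) : ∑ a, fullCoord m y i a = 1 := by
  rw [fullCoord, Fin.sum_cons]
  ring

@[fun_prop]
theorem differentiable_fullCoord_apply (j : ι) (a : Fin (m j + 1)) :
    Differentiable ℝ fun y : ∀ j, Fin (m j) → ℝ => fullCoord m y j a := by
  cases a using Fin.cases <;> simp only [fullCoord, Fin.cons_zero, Fin.cons_succ] <;> fun_prop

variable (i : ι) {y : ∀ j, Fin (m j) → ℝ}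

theorem sqrtDet_pos (hy : ∀ l, 0 < y i l) (hy1 : ∑ l, y i l < 1) : 0 < sqrtDet m i y :=
  Real.sqrt_pos.mpr <| one_div_pos.mpr <| mul_pos (by linarith) (prod_pos fun l _ => hy l)

theorem differentiableAt_sqrtDet (hy : ∀ l, 0 < y i l) (hy1 : ∑ l, y i l < 1) :
    DifferentiableAt ℝ (sqrtDet m i) y := by
  have hpos : 0 < (1 - ∑ l, y i l) * ∏ l, y i l :=
    mul_pos (by linarith) (prod_pos fun l _ => hy l)
  unfold sqrtDet
  fun_prop (disch := positivity)

end Simplex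

section Payoffs

variable {ι : Type*} [Fintype ι] [DecidableEq ι] (m : ι → ℕ)
  (u : ι → (∀ j, Fin (m j + 1)) → ℝ) (i : ι)

theorem unilateralPayoff_eq_sum (a : Fin (m i + 1)) (x : ∀ j, Fin (m j + 1) → ℝ) :
    unilateralPayoff m u i a x
      = ∑ γ : ∀ j : {j // j ≠ i}, Fin (m j + 1),
          u i ((Equiv.piSplitAt i _).symm (a, γ)) * ∏ j, x j.1 (γ j) := by
  have h_off_i (g) (j : {j // j ≠ i}) : Function.update x i g j = x j :=
    Function.update_of_ne j.2 _ _
  rw [unilateralPayoff, mixedPayoff, sum_mul_prod_eq_sum_mul_sum_piSplitAt (i := i)]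
  simp [h_off_i]

theorem mixedPayoff_eq_sum_mul_unilateralPayoff (x : ∀ j, Fin (m j + 1) → ℝ) :
    mixedPayoff m u i x = ∑ a, x i a * unilateralPayoff m u i a x := by
  simp only [mixedPayoff, unilateralPayoff_eq_sum, sum_mul_prod_eq_sum_mul_sum_piSplitAt (i := i)]

theorem unilateralPayoff_congr {a : Fin (m i + 1)} {x x' : ∀ j, Fin (m j + 1) → ℝ}
    (h : ∀ j ≠ i, x j = x' j) :
    unilateralPayoff m u i a x = unilateralPayoff m u i a x' := by
  simp only [unilateralPayoff_eq_sum, fun j : {j // j ≠ i} => h j j.2]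

theorem sum_prod_mul_update_eq_unilateralPayoff {x : ∀ j, Fin (m j + 1) → ℝ}
    (hx : ∑ a, x i a = 1) (b : Fin (m i + 1)) :
    ∑ α : ∀ j, Fin (m j + 1), (∏ j, x j (α j)) * u i (Function.update α i b)
      = unilateralPayoff m u i b x := by
  simp_rw [mul_comm (∏ j, _)]
  rw [sum_mul_prod_eq_sum_mul_sum_piSplitAt (i := i), unilateralPayoff_eq_sum]
  simp only [Function.update_piSplitAt_symm, ← sum_mul, hx, one_mul]

theorem sum_prod_mul_harmonicity {x : ∀ j, Fin (m j + 1) → ℝ} (hx : ∀ i, ∑ a, x i a = 1) :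
    ∑ α : ∀ j, Fin (m j + 1), (∏ j, x j (α j)) *
        ∑ i, ∑ b : Fin (m i + 1), (u i (Function.update α i b) - u i α)
      = ∑ i, (∑ b, unilateralPayoff m u i b x - (m i + 1) * mixedPayoff m u i x) := by
  simp only [mul_sum, mul_sub]
  rw [sum_comm]
  refine sum_congr rfl fun i _ => ?_
  rw [sum_comm]
  simp only [sum_sub_distrib, sum_prod_mul_update_eq_unilateralPayoff m u i (hx i), sum_const,
    card_univ, Fintype.card_fin, nsmul_eq_mul, mixedPayoff, mul_comm (u i _)]
  push_cast
  ring

end Payoffs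

section Divergence

variable {ι : Type*} [Fintype ι] [DecidableEq ι] (m : ι → ℕ)
  (u : ι → (∀ j, Fin (m j + 1)) → ℝ) (y : ∀ j, Fin (m j) → ℝ) (i : ι) (k : Fin (m i))

theorem add_smul_coordDir_apply_self (t : ℝ) :
    (y + t • coordDir m i k) i = y i + Pi.single k t := by
  ext l
  simp [coordDir, Pi.single_apply]

theorem add_smul_coordDir_apply_of_ne (t : ℝ) {j : ι} (hj : j ≠ i) :
    (y + t • coordDir m i k) j = y j := by
  simp [coordDir, hj]

theorem sum_add_smul_coordDir (t : ℝ) : ∑ l, (y + t • coordDir m i k) i l = ∑ l, y i l + t := by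
  rw [add_smul_coordDir_apply_self]
  simp [sum_add_distrib]

theorem prod_add_smul_coordDir (t : ℝ) :
    ∏ l, (y + t • coordDir m i k) i l = (y i k + t) * ∏ l ∈ univ.erase k, y i l := by
  rw [add_smul_coordDir_apply_self, ← mul_prod_erase _ _ (mem_univ k)]
  congr 1
  · simp
  · exact prod_congr rfl fun l hl => by simp [ne_of_mem_erase hl]

theorem effField_add_smul_coordDir (t : ℝ) (l : Fin (m i)) :
    effField m u i l (y + t • coordDir m i k) = effField m u i l y := by
  have h (j) (hj : j ≠ i) : fullCoord m (y + t • coordDir m i k) j = fullCoord m y j := by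
    simp only [fullCoord, add_smul_coordDir_apply_of_ne m y i k t hj]
  simp only [effField, unilateralPayoff_congr m u i h]

theorem differentiable_effField (l : Fin (m i)) : Differentiable ℝ (effField m u i l) := by
  unfold effField
  simp only [unilateralPayoff_eq_sum]
  fun_prop

theorem differentiable_effReplicator : Differentiable ℝ (effReplicator m u i k) := by
  have := differentiable_effField m u i
  unfold effReplicator
  fun_prop

variable {y}

theorem hasDerivAt_sqrtDet_line (hy : ∀ l, 0 < y i l) (hy1 : ∑ l, y i l < 1) :
    HasDerivAt (fun t : ℝ => sqrtDet m i (y + t • coordDir m i k))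
      (sqrtDet m i y * (1 / (2 * (1 - ∑ l, y i l)) - 1 / (2 * y i k))) 0 := by
  have hx₀ : 0 < 1 - ∑ l, y i l := by linarith
  have hk : 0 < y i k := hy k
  have hc : 0 < ∏ l ∈ univ.erase k, y i l := prod_pos fun l _ => hy l
  set x₀ := 1 - ∑ l, y i l
  set c := ∏ l ∈ univ.erase k, y i l
  have hline (t : ℝ) :
      sqrtDet m i (y + t • coordDir m i k) = √((x₀ - t) * ((y i k + t) * c))⁻¹ := by
    rw [sqrtDet, sum_add_smul_coordDir, prod_add_smul_coordDir, one_div, sub_add_eq_sub_sub]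
  have hline₀ : sqrtDet m i y = √((x₀ - 0) * ((y i k + 0) * c))⁻¹ := by
    simpa using hline 0
  have hw : HasDerivAt (fun t => (x₀ - t) * ((y i k + t) * c)) (x₀ * c - y i k * c) 0 :=
    (((hasDerivAt_id' 0).const_sub x₀).mul
      (((hasDerivAt_id' 0).const_add _).mul_const c)).congr_deriv (by ring)
  simp only [hline, hline₀]
  refine (hw.sqrt_inv (by simp only [sub_zero, add_zero]; positivity)).congr_deriv ?_
  field_simp [hx₀.ne']
  ring

variable (y) in
theorem hasDerivAt_effReplicator_line :
    HasDerivAt (fun t : ℝ => effReplicator m u i k (y + t • coordDir m i k))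
      (effField m u i k y - ∑ l, y i l * effField m u i l y - y i k * effField m u i k y) 0 := by
  set v := fun l => effField m u i l y
  have hline (t : ℝ) : effReplicator m u i k (y + t • coordDir m i k)
      = (y i k + t) * (v k - (∑ l, y i l * v l + t * v k)) := by
    rw [effReplicator, add_smul_coordDir_apply_self]
    simp [effField_add_smul_coordDir, v, add_mul, sum_add_distrib, Pi.single_apply]
  simp only [hline]
  exact (((hasDerivAt_id' 0).const_add _).mul
    (((hasDerivAt_id' 0).mul_const _).const_add _ |>.const_sub _)).congr_deriv (by simp; ring)

theorem inv_sqrtDet_mul_fderiv (hy : ∀ l, 0 < y i l) (hy1 : ∑ l, y i l < 1) :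
    (sqrtDet m i y)⁻¹ *
        fderiv ℝ (fun z => sqrtDet m i z * effReplicator m u i k z) y (coordDir m i k)
      = (effField m u i k y - ∑ l, y i l * effField m u i l y) *
          (1 / 2 + y i k / (2 * (1 - ∑ l, y i l))) - y i k * effField m u i k y := by
  have hdiff : DifferentiableAt ℝ (fun z => sqrtDet m i z * effReplicator m u i k z) y :=
    (differentiableAt_sqrtDet m i hy hy1).mul (differentiable_effReplicator m u i k y)
  have hline : HasLineDerivAt ℝ (fun z => sqrtDet m i z * effReplicator m u i k z) _ y
      (coordDir m i k) :=
    (hasDerivAt_sqrtDet_line m i k hy hy1).mul (hasDerivAt_effReplicator_line m u y i k)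
  have hx₀ : 1 - ∑ l, y i l ≠ 0 := by linarith
  have hk : y i k ≠ 0 := (hy k).ne'
  have hsqrt : sqrtDet m i y ≠ 0 := (sqrtDet_pos m i hy hy1).ne'
  rw [(hdiff.hasFDerivAt.hasLineDerivAt _).unique hline, zero_smul, add_zero, effReplicator]
  field_simp
  ring

theorem inv_sqrtDet_mul_sum_fderiv (hy : ∀ l, 0 < y i l) (hy1 : ∑ l, y i l < 1) :
    (sqrtDet m i y)⁻¹ *
        ∑ k, fderiv ℝ (fun z => sqrtDet m i z * effReplicator m u i k z) y (coordDir m i k)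
      = (∑ a, unilateralPayoff m u i a (fullCoord m y)
          - (m i + 1) * mixedPayoff m u i (fullCoord m y)) / 2 := by
  rw [mul_sum]
  simp only [inv_sqrtDet_mul_fderiv m u i _ hy hy1]
  rw [sum_replicator_divergence_eq _ _ hy1.ne, mixedPayoff_eq_sum_mul_unilateralPayoff,
    ← Fin.sum_sub_zero_sub_mul_sum_eq _ _ (fullCoord_sum m y i)]
  rfl

end Divergence

/-- **The Shahshahani divergence of the effective replicator field equals one half of
the multilinear extension of the harmonicity function**:
`div X̃(x) = (1/2) ∑_{α} x_α F(α)` where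
`F(α) = ∑_i ∑_{β_i} (u_i(β_i;α_{-i}) − u_i(α_i;α_{-i}))` and `x_α = ∏_i x_{i,α_i}`. -/
theorem shahshahani_divergence_eq_harmonicity_extension
    {ι : Type*} [Fintype ι] [DecidableEq ι] (m : ι → ℕ)
    (u : ι → (∀ j, Fin (m j + 1)) → ℝ) (y : ∀ j, Fin (m j) → ℝ)
    (hy : ∀ i k, 0 < y i k) (hy1 : ∀ i, ∑ k, y i k < 1) :
    shahDiv m u y = (1 / 2) * ∑ α : ∀ j, Fin (m j + 1),
      (∏ j, fullCoord m y j (α j)) *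
        ∑ i, ∑ b : Fin (m i + 1), (u i (Function.update α i b) - u i α) := by
  rw [shahDiv, sum_prod_mul_harmonicity m u (fullCoord_sum m y), mul_sum]
  refine sum_congr rfl fun i _ => ?_
  rw [inv_sqrtDet_mul_sum_fderiv m u i (hy i) (hy1 i)]
  ring

end
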